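/- Let G and H be étale groupoids and φ : H → G a continuous groupoid homomorphism that restricts to a bijection H_t → G_{φ(t)} between source fibres for every unit t ∈ H⁽⁰⁾. Define ρ := φ∘r : H → G⁽⁰⁾ and, for (γ, x) with s(γ) = ρ(x), set γ·x := φ|_{H_{r(x)}}⁻¹(γ) · x (product in H). Then this defines an actor of G on H; in particular the multiplication map is continuous. -/

import Mathlib

open Topology

/-- A topological groupoid: a set with a partially defined multiplication
(`D a b` expresses composability), an inversion, satisfying the groupoid
axioms, such that inversion is continuous and multiplication is continuous
on the set of composable pairs. -/
structure TopGroupoid (G : Type*) [TopologicalSpace G] where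
  /-- composability -/
  D : G → G → Prop
  /-- partially defined multiplication (junk values off `D`) -/
  comp : G → G → G
  /-- inversion -/
  inv : G → G
  inv_inv : ∀ g, inv (inv g) = g
  d_inv : ∀ g, D g (inv g)
  d_eq : ∀ a b, D a b ↔ comp (inv a) a = comp b (inv b)
  d_comp_left : ∀ {a b c}, D a b → D b c → D (comp a b) c
  d_comp_right : ∀ {a b c}, D a b → D b c → D a (comp b c)
  assoc : ∀ {a b c}, D a b → D b c → comp (comp a b) c = comp a (comp b c)
  cancel_left : ∀ {g h}, D g h → comp (inv g) (comp g h) = h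
  cancel_right : ∀ {g h}, D g h → comp (comp g h) (inv h) = g
  continuous_inv : Continuous inv
  continuousOn_comp : ContinuousOn (fun p : G × G => comp p.1 p.2) {p | D p.1 p.2}

namespace TopGroupoid

variable {G : Type*} [TopologicalSpace G]

/-- The source map `s(γ) = γ⁻¹γ`. -/
def src (S : TopGroupoid G) (g : G) : G := S.comp (S.inv g) g

/-- The range map `r(γ) = γγ⁻¹`. -/
def rng (S : TopGroupoid G) (g : G) : G := S.comp g (S.inv g)

/-- The unit space `G⁽⁰⁾ = {γ⁻¹γ : γ ∈ G}`. -/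
def unitSpace (S : TopGroupoid G) : Set G := Set.range S.src

/-- A groupoid is étale if its range map is a local homeomorphism. -/
def IsEtale (S : TopGroupoid G) : Prop := IsLocalHomeomorph S.rng

/-- An open bisection: an open set on which both the source and the range map
are injective (hence, in an étale groupoid, restrict to homeomorphisms onto
their open images). -/
def IsOpenBisection (S : TopGroupoid G) (U : Set G) : Prop :=
  IsOpen U ∧ Set.InjOn S.src U ∧ Set.InjOn S.rng U

/-- Pointwise product of subsets: `U·V = {γη : γ ∈ U, η ∈ V, s γ = r η}`. -/
def setMul (S : TopGroupoid G) (U V : Set G) : Set G :=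
  {g | ∃ a ∈ U, ∃ b ∈ V, S.D a b ∧ g = S.comp a b}

/-- Pointwise inverse of a subset: `U⁻¹ = {γ⁻¹ : γ ∈ U}`. -/
def setInv (S : TopGroupoid G) (U : Set G) : Set G := S.inv '' U

end TopGroupoid

/-- An actor `G ↷ H`: a continuous left action of `G` on `H` (with anchor map
`ρ : H → G⁽⁰⁾`) which commutes with the right multiplication of `H` on itself. -/
structure Actor {G : Type*} {H : Type*} [TopologicalSpace G] [TopologicalSpace H]
    (S : TopGroupoid G) (T : TopGroupoid H) where
  /-- the anchor map -/
  rho : H → G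
  /-- the action multiplication, partially defined (junk off `s γ = ρ x`) -/
  act : G → H → H
  rho_mem : ∀ x, rho x ∈ S.unitSpace
  continuous_rho : Continuous rho
  continuousOn_act :
    ContinuousOn (fun p : G × H => act p.1 p.2) {p | S.src p.1 = rho p.2}
  rho_act : ∀ {γ x}, S.src γ = rho x → rho (act γ x) = S.rng γ
  act_assoc : ∀ {γ₁ γ₂ x}, S.D γ₁ γ₂ → S.src γ₂ = rho x →
      act γ₁ (act γ₂ x) = act (S.comp γ₁ γ₂) x
  act_unit : ∀ x, act (rho x) x = x
  rho_comp : ∀ {x y}, T.D x y → rho (T.comp x y) = rho x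
  src_act : ∀ {γ x}, S.src γ = rho x → T.src (act γ x) = T.src x
  act_right : ∀ {γ x y}, S.src γ = rho x → T.D x y →
      act γ (T.comp x y) = T.comp (act γ x) y

namespace Actor

variable {G H : Type*} [TopologicalSpace G] [TopologicalSpace H]
variable {S : TopGroupoid G} {T : TopGroupoid H}

/-- An actor is free if the only arrows fixing a unit are units. -/
def Free (A : Actor S T) : Prop :=
  ∀ t ∈ T.unitSpace, ∀ γ : G, S.src γ = A.rho t → A.act γ t = t → γ ∈ S.unitSpace

/-- An actor is proper if the anchor map restricted to the unit space of `H`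
is a proper map. -/
def Proper (A : Actor S T) : Prop := IsProperMap (T.unitSpace.restrict A.rho)

/-- `U·V = {γ·x : γ ∈ U, x ∈ V, s γ = ρ x}`. -/
def actSet (A : Actor S T) (U : Set G) (V : Set H) : Set H :=
  {y | ∃ γ ∈ U, ∃ x ∈ V, S.src γ = A.rho x ∧ y = A.act γ x}

end Actor

/-!
The actor axioms are the groupoid axioms of `H` transported along the bijections
`H_t ≅ G_{φ t}`. For continuity at `(γ₀, x₀)`, étaleness of `H` gives a continuous local
section `σ` of `s` through the lift of `γ₀`; then `φ (σ (r x))` and `γ` are continuous arrows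
with the same source that agree at `(γ₀, x₀)`, so `φ (σ (r x)) γ⁻¹` lies in the unit space,
which is open because `G` is étale, for `(γ, x)` near `(γ₀, x₀)`. Hence `σ (r x)` is the lift
of `γ` there.
-/

namespace TopGroupoid

section Basic

variable {G : Type*} [TopologicalSpace G] {S : TopGroupoid G} {a b g u : G}

theorem d_iff_src_eq_rng : S.D a b ↔ S.src a = S.rng b := S.d_eq a b

theorem d_inv_left (g : G) : S.D (S.inv g) g := (S.d_eq _ _).2 (by rw [S.inv_inv])

theorem src_eq_rng_inv (g : G) : S.src g = S.rng (S.inv g) := by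
  rw [rng, S.inv_inv]; rfl

theorem rng_eq_src_inv (g : G) : S.rng g = S.src (S.inv g) := by
  rw [src, S.inv_inv]; rfl

theorem src_comp (h : S.D a b) : S.src (S.comp a b) = S.src b :=
  (d_iff_src_eq_rng.1 (S.d_comp_left h (S.d_inv b))).trans (src_eq_rng_inv b).symm

theorem rng_comp (h : S.D a b) : S.rng (S.comp a b) = S.rng a :=
  ((rng_eq_src_inv a).trans (d_iff_src_eq_rng.1 (S.d_comp_right (d_inv_left a) h))).symm

theorem comp_rng_self (g : G) : S.comp (S.rng g) g = g := by
  have h := S.cancel_right (S.d_inv g)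
  rw [S.inv_inv] at h
  exact h

theorem comp_self_src (g : G) : S.comp g (S.src g) = g :=
  (S.assoc (S.d_inv g) (d_inv_left g)).symm.trans (comp_rng_self g)

theorem rng_mem_unitSpace (g : G) : S.rng g ∈ S.unitSpace :=
  ⟨S.inv g, (rng_eq_src_inv g).symm⟩

theorem src_of_mem_unitSpace (hu : u ∈ S.unitSpace) : S.src u = u := by
  obtain ⟨g, rfl⟩ := hu
  exact src_comp (d_inv_left g)

theorem rng_of_mem_unitSpace (hu : u ∈ S.unitSpace) : S.rng u = u := by
  obtain ⟨g, rfl⟩ := hu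
  exact (rng_comp (d_inv_left g)).trans (src_eq_rng_inv g).symm

theorem eq_of_comp_inv_mem_unitSpace (hD : S.D a (S.inv b))
    (hu : S.comp a (S.inv b) ∈ S.unitSpace) : a = b := by
  have hsrc : S.src a = S.src b := (d_iff_src_eq_rng.1 hD).trans (src_eq_rng_inv b).symm
  have hunit : S.comp a (S.inv b) = S.rng b :=
    (src_of_mem_unitSpace hu).symm.trans ((src_comp hD).trans (rng_eq_src_inv b).symm)
  calc a = S.comp a (S.comp (S.inv b) b) := by rw [← src, ← hsrc, comp_self_src]
    _ = S.comp (S.rng b) b := by rw [← S.assoc hD (d_inv_left b), hunit]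
    _ = b := comp_rng_self b

theorem IsEtale.isLocalHomeomorph_src (hS : S.IsEtale) : IsLocalHomeomorph S.src := by
  have h : S.src = S.rng ∘ S.inv := funext src_eq_rng_inv
  rw [h]
  exact hS.comp (Homeomorph.isLocalHomeomorph
    ⟨⟨S.inv, S.inv, S.inv_inv, S.inv_inv⟩, S.continuous_inv, S.continuous_inv⟩)

theorem IsEtale.exists_continuousOn_src_section (hS : S.IsEtale) (g₀ : G) :
    ∃ σ : G → G, ∃ U : Set G, IsOpen U ∧ S.src g₀ ∈ U ∧ ContinuousOn σ U ∧
      (∀ u ∈ U, S.src (σ u) = u) ∧ σ (S.src g₀) = g₀ := by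
  obtain ⟨e, hg₀, he⟩ := hS.isLocalHomeomorph_src g₀
  rw [he]
  exact ⟨e.symm, e.target, e.open_target, e.map_source hg₀, e.continuousOn_symm,
    fun _ hu => e.right_inv hu, e.left_inv hg₀⟩

theorem IsEtale.isOpen_unitSpace (hS : S.IsEtale) : IsOpen S.unitSpace := by
  have hfix : S.unitSpace = {g | S.rng g = g} :=
    Set.ext fun g => ⟨rng_of_mem_unitSpace, fun h => h ▸ rng_mem_unitSpace g⟩
  rw [hfix, isOpen_iff_forall_mem_open]
  intro u hu
  obtain ⟨e, hue, hfe⟩ := hS u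
  refine ⟨e.source ∩ S.rng ⁻¹' e.source, ?_, ?_, hue, by rwa [Set.mem_preimage, hu]⟩
  · rintro g ⟨hg, hrg⟩
    refine e.injOn hrg hg ?_
    rw [← hfe, rng_of_mem_unitSpace (rng_mem_unitSpace g)]
  · exact e.open_source.inter (e.open_source.preimage hS.continuous)

theorem IsEtale.eventuallyEq_of_src_eq (hS : S.IsEtale) {X : Type*} [TopologicalSpace X]
    {f g : X → G} {s : Set X} {x₀ : X} (hf : ContinuousWithinAt f s x₀)
    (hg : ContinuousWithinAt g s x₀) (hsrc : ∀ x ∈ s, S.src (f x) = S.src (g x))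
    (h₀ : f x₀ = g x₀) : f =ᶠ[𝓝[s] x₀] g := by
  have hD : ∀ x, S.src (f x) = S.src (g x) → S.D (f x) (S.inv (g x)) := fun x h =>
    d_iff_src_eq_rng.2 (h.trans (src_eq_rng_inv _))
  have hcont : ContinuousWithinAt (fun x => S.comp (f x) (S.inv (g x))) s x₀ :=
    (S.continuousOn_comp _ (hD x₀ (congrArg S.src h₀))).comp
      (hf.prodMk (S.continuous_inv.continuousAt.comp_continuousWithinAt hg))
      fun x hx => hD x (hsrc x hx)
  have hunit : S.comp (f x₀) (S.inv (g x₀)) ∈ S.unitSpace := h₀ ▸ rng_mem_unitSpace _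
  filter_upwards [hcont.eventually (hS.isOpen_unitSpace.eventually_mem hunit),
    self_mem_nhdsWithin] with x hu hx
  exact eq_of_comp_inv_mem_unitSpace (hD x (hsrc x hx)) hu

end Basic

section Lift

variable {G H : Type*} [TopologicalSpace H] {T : TopGroupoid H} {φ : H → G} {γ : G} {t : H}

noncomputable def fibreLift (T : TopGroupoid H) (φ : H → G) (γ : G) (t : H) : H :=
  open Classical in if h : ∃ x, T.src x = t ∧ φ x = γ then h.choose else t

theorem fibreLift_spec (h : ∃ x, T.src x = t ∧ φ x = γ) :
    T.src (fibreLift T φ γ t) = t ∧ φ (fibreLift T φ γ t) = γ := by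
  rw [fibreLift, dif_pos h]
  exact h.choose_spec

end Lift

variable {G H : Type*} [TopologicalSpace G] [TopologicalSpace H]
  {S : TopGroupoid G} {T : TopGroupoid H} {φ : H → G}

structure IsHom (S : TopGroupoid G) (T : TopGroupoid H) (φ : H → G) : Prop where
  map_comp : ∀ {x y : H}, T.D x y → φ (T.comp x y) = S.comp (φ x) (φ y)
  map_inv : ∀ x : H, φ (T.inv x) = S.inv (φ x)

theorem IsHom.map_src (hhom : IsHom S T φ) (x : H) : φ (T.src x) = S.src (φ x) := by
  rw [src, hhom.map_comp (d_inv_left x), hhom.map_inv]; rfl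

theorem IsHom.map_rng (hhom : IsHom S T φ) (x : H) : φ (T.rng x) = S.rng (φ x) := by
  rw [rng, hhom.map_comp (T.d_inv x), hhom.map_inv]; rfl

def IsFibrewiseBijective (S : TopGroupoid G) (T : TopGroupoid H) (φ : H → G) : Prop :=
  ∀ t ∈ T.unitSpace, Set.BijOn φ {x | T.src x = t} {g | S.src g = φ t}

variable {γ : G} {t y : H}

theorem IsFibrewiseBijective.exists_lift (hφ : IsFibrewiseBijective S T φ)
    (ht : t ∈ T.unitSpace) (hγ : S.src γ = φ t) : ∃ x, T.src x = t ∧ φ x = γ :=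
  (hφ t ht).surjOn hγ

theorem IsFibrewiseBijective.src_fibreLift (hφ : IsFibrewiseBijective S T φ)
    (ht : t ∈ T.unitSpace) (hγ : S.src γ = φ t) : T.src (fibreLift T φ γ t) = t :=
  (fibreLift_spec (hφ.exists_lift ht hγ)).1

theorem IsFibrewiseBijective.map_fibreLift (hφ : IsFibrewiseBijective S T φ)
    (ht : t ∈ T.unitSpace) (hγ : S.src γ = φ t) : φ (fibreLift T φ γ t) = γ :=
  (fibreLift_spec (hφ.exists_lift ht hγ)).2

theorem IsFibrewiseBijective.fibreLift_eq (hφ : IsFibrewiseBijective S T φ)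
    (ht : t ∈ T.unitSpace) (hy : T.src y = t) (hyγ : φ y = γ) : fibreLift T φ γ t = y :=
  have hspec := fibreLift_spec ⟨y, hy, hyγ⟩
  (hφ t ht).injOn hspec.1 hy (hspec.2.trans hyγ.symm)

theorem IsFibrewiseBijective.d_fibreLift (hφ : IsFibrewiseBijective S T φ) {x : H}
    (h : S.src γ = φ (T.rng x)) : T.D (fibreLift T φ γ (T.rng x)) x :=
  d_iff_src_eq_rng.2 (hφ.src_fibreLift (rng_mem_unitSpace x) h)

theorem IsFibrewiseBijective.fibreLift_comp (hφ : IsFibrewiseBijective S T φ)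
    (hhom : IsHom S T φ) {γ₁ γ₂ : G} (h₁₂ : S.D γ₁ γ₂) (ht : t ∈ T.unitSpace)
    (hγ₂ : S.src γ₂ = φ t) :
    fibreLift T φ (S.comp γ₁ γ₂) t =
      T.comp (fibreLift T φ γ₁ (T.rng (fibreLift T φ γ₂ t))) (fibreLift T φ γ₂ t) := by
  set y₂ := fibreLift T φ γ₂ t
  have hy₂ : φ y₂ = γ₂ := hφ.map_fibreLift ht hγ₂
  have hγ₁ : S.src γ₁ = φ (T.rng y₂) := by
    rw [hhom.map_rng, hy₂]; exact d_iff_src_eq_rng.1 h₁₂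
  set y₁ := fibreLift T φ γ₁ (T.rng y₂)
  have hy₁y₂ : T.D y₁ y₂ := hφ.d_fibreLift hγ₁
  refine hφ.fibreLift_eq ht ?_ ?_
  · rw [src_comp hy₁y₂]; exact hφ.src_fibreLift ht hγ₂
  · rw [hhom.map_comp hy₁y₂, hφ.map_fibreLift (rng_mem_unitSpace y₂) hγ₁, hy₂]

theorem continuousOn_fibreLift (hS : S.IsEtale) (hT : T.IsEtale) (hcont : Continuous φ)
    (hhom : IsHom S T φ) (hφ : IsFibrewiseBijective S T φ) :
    ContinuousOn (fun p : G × H => fibreLift T φ p.1 p.2)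
      {p | p.2 ∈ T.unitSpace ∧ S.src p.1 = φ p.2} := by
  set W : Set (G × H) := {p | p.2 ∈ T.unitSpace ∧ S.src p.1 = φ p.2}
  rintro ⟨γ₀, t₀⟩ ⟨ht₀, hγ₀⟩
  set y₀ := fibreLift T φ γ₀ t₀
  have hy₀ : T.src y₀ = t₀ := hφ.src_fibreLift ht₀ hγ₀
  obtain ⟨σ, U, hU, hy₀U, hσ, hσsrc, hσy₀⟩ := hT.exists_continuousOn_src_section y₀
  rw [hy₀] at hy₀U hσy₀
  have hUnhds : Prod.snd ⁻¹' U ∈ 𝓝 (γ₀, t₀) :=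
    continuous_snd.continuousAt.preimage_mem_nhds (hU.mem_nhds hy₀U)
  have hσcont : ContinuousAt (fun p : G × H => σ p.2) (γ₀, t₀) :=
    (hσ.continuousAt (hU.mem_nhds hy₀U)).comp continuous_snd.continuousAt
  have hlift : ∀ᶠ p in 𝓝[W ∩ Prod.snd ⁻¹' U] (γ₀, t₀), φ (σ p.2) = p.1 := by
    refine hS.eventuallyEq_of_src_eq (hcont.continuousAt.comp hσcont).continuousWithinAt
      continuous_fst.continuousWithinAt ?_
      (by simp only [hσy₀, hφ.map_fibreLift ht₀ hγ₀, y₀])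
    rintro ⟨γ, t⟩ ⟨⟨-, hγ⟩, htU⟩
    rw [← hhom.map_src, hσsrc t htU, hγ]
  rw [nhdsWithin_inter_of_mem' (mem_nhdsWithin_of_mem_nhds hUnhds)] at hlift
  refine hσcont.continuousWithinAt.congr_of_eventuallyEq ?_ (by simp only [hσy₀, y₀])
  filter_upwards [hlift, self_mem_nhdsWithin, mem_nhdsWithin_of_mem_nhds hUnhds]
    with p hφσ hp hpU
  exact hφ.fibreLift_eq hp.1 (hσsrc p.2 hpU) hφσ

end TopGroupoid

open TopGroupoid in
noncomputable def Actor.ofFibrewiseBijective {G H : Type*} [TopologicalSpace G]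
    [TopologicalSpace H] {S : TopGroupoid G} {T : TopGroupoid H} {φ : H → G}
    (hS : S.IsEtale) (hT : T.IsEtale) (hcont : Continuous φ) (hhom : IsHom S T φ)
    (hφ : IsFibrewiseBijective S T φ) : Actor S T where
  rho x := φ (T.rng x)
  act γ x := T.comp (fibreLift T φ γ (T.rng x)) x
  rho_mem x := hhom.map_rng x ▸ rng_mem_unitSpace (φ x)
  continuous_rho := hcont.comp hT.continuous
  continuousOn_act := by
    refine T.continuousOn_comp.comp (ContinuousOn.prodMk ?_ continuousOn_snd)
      fun p hp => hφ.d_fibreLift hp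
    exact (continuousOn_fibreLift hS hT hcont hhom hφ).comp
      (continuous_fst.prodMk (hT.continuous.comp continuous_snd)).continuousOn
      fun p hp => ⟨rng_mem_unitSpace p.2, hp⟩
  rho_act {γ x} h := by
    rw [rng_comp (hφ.d_fibreLift h), hhom.map_rng, hφ.map_fibreLift (rng_mem_unitSpace x) h]
  act_assoc {γ₁ γ₂ x} h₁₂ h₂ := by
    have hD := hφ.d_fibreLift h₂
    rw [rng_comp hD, hφ.fibreLift_comp hhom h₁₂ (rng_mem_unitSpace x) h₂, T.assoc _ hD]
    exact d_iff_src_eq_rng.2 <| hφ.src_fibreLift (rng_mem_unitSpace _) <| by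
      rw [hhom.map_rng, hφ.map_fibreLift (rng_mem_unitSpace x) h₂]
      exact d_iff_src_eq_rng.1 h₁₂
  act_unit x := by
    rw [hφ.fibreLift_eq (rng_mem_unitSpace x) (src_of_mem_unitSpace (rng_mem_unitSpace x)) rfl,
      comp_rng_self]
  rho_comp hxy := by rw [rng_comp hxy]
  src_act h := src_comp (hφ.d_fibreLift h)
  act_right h hxy := by
    rw [rng_comp hxy, T.assoc (hφ.d_fibreLift h) hxy]

theorem fibrewise_bijective_gives_actor_general {G H : Type*} [TopologicalSpace G]
    [TopologicalSpace H] (S : TopGroupoid G) (T : TopGroupoid H)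
    (hS : S.IsEtale) (hT : T.IsEtale)
    (φ : H → G) (hcont : Continuous φ)
    (hcomp : ∀ {x y : H}, T.D x y → φ (T.comp x y) = S.comp (φ x) (φ y))
    (hinv : ∀ x : H, φ (T.inv x) = S.inv (φ x))
    (hbij : ∀ t ∈ T.unitSpace,
      Set.BijOn φ {x : H | T.src x = t} {g : G | S.src g = φ t}) :
    ∃ A : Actor S T,
      (A.rho = fun x => φ (T.rng x)) ∧
      ∀ (γ : G) (x : H), S.src γ = φ (T.rng x) →
        ∃ y : H, φ y = γ ∧ T.src y = T.rng x ∧ A.act γ x = T.comp y x :=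
  have hφ : TopGroupoid.IsFibrewiseBijective S T φ := hbij
  ⟨Actor.ofFibrewiseBijective hS hT hcont ⟨hcomp, hinv⟩ hφ, rfl, fun _ x h =>
    have hx := TopGroupoid.rng_mem_unitSpace x
    ⟨_, hφ.map_fibreLift hx h, hφ.src_fibreLift hx h, rfl⟩⟩

/-- A continuous groupoid homomorphism `φ : H → G` between étale groupoids
that is fibrewise bijective (restricts to a bijection between source fibres)
gives rise to an actor of `G` on `H` with anchor `ρ = φ ∘ r`, whose
multiplication `γ·x` is `y x` (product in `H`) for the unique `y` in the
source fibre of `r(x)` with `φ y = γ`. In particular, this action (being an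
`Actor`) has continuous multiplication. -/
theorem fibrewise_bijective_gives_actor {G H : Type*} [TopologicalSpace G]
    [TopologicalSpace H] (S : TopGroupoid G) (T : TopGroupoid H)
    (hS : S.IsEtale) (hT : T.IsEtale)
    (φ : H → G) (hcont : Continuous φ)
    (hD : ∀ {x y : H}, T.D x y → S.D (φ x) (φ y))
    (hcomp : ∀ {x y : H}, T.D x y → φ (T.comp x y) = S.comp (φ x) (φ y))
    (hinv : ∀ x : H, φ (T.inv x) = S.inv (φ x))
    (hbij : ∀ t ∈ T.unitSpace,
      Set.BijOn φ {x : H | T.src x = t} {g : G | S.src g = φ t}) :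
    ∃ A : Actor S T,
      (A.rho = fun x => φ (T.rng x)) ∧
      ∀ (γ : G) (x : H), S.src γ = φ (T.rng x) →
        ∃ y : H, φ y = γ ∧ T.src y = T.rng x ∧ A.act γ x = T.comp y x :=
  fibrewise_bijective_gives_actor_general S T hS hT φ hcont hcomp hinv hbij
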